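/- Let R be a left rule with premises {Γ, φ̄_i ⇒ ψ̄_i}_{i∈I} ∪ {Γ, θ̄_j ⇒ Δ}_{j∈J} and conclusion Γ, η̄ ⇒ Δ, where I, J are finite index sets, the φ̄_i, θ̄_j, η̄ are finite multisets of formulas, the ψ̄_i contain at most one formula, and Γ, Δ are multiset variables (Δ containing at most one formula). Define Ax_R := (⋀_{i∈I}(⋀φ̄_i → ⋁ψ̄_i) ∧ ⋀η̄) → ⋁_{j∈J}(⋀θ̄_j). Then: (i) the sequent (⇒ Ax_R) is provable in LJ extended by the rule R (closed under all substitutions of formulas for atoms and multisets for Γ and Δ); (ii) for every substitution σ of formulas for atoms and all multisets Γ and Δ, the sequent Γ, σ(η̄) ⇒ Δ is derivable in LJ extended by the initial sequents (⇒ σ'(Ax_R)) for all substitutions σ', from the assumptions {Γ, σ(φ̄_i) ⇒ σ(ψ̄_i)}_{i∈I} ∪ {Γ, σ(θ̄_j) ⇒ Δ}_{j∈J}. -/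

import Mathlib

set_option autoImplicit false

namespace UPT

/-- Modal formulas over atoms of type `α` (the language `ℒ = {∧,∨,→,⊤,⊥,□,◇}`). -/
inductive Fml (α : Type) : Type where
  | atom : α → Fml α
  | top  : Fml α
  | bot  : Fml α
  | and  : Fml α → Fml α → Fml α
  | or   : Fml α → Fml α → Fml α
  | imp  : Fml α → Fml α → Fml α
  | box  : Fml α → Fml α
  | dia  : Fml α → Fml α
deriving DecidableEq

variable {α β : Type}

/-- Simultaneous substitution of formulas for atoms. -/
def Fml.subst (σ : β → Fml α) : Fml β → Fml α
  | .atom b  => σ b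
  | .top     => .top
  | .bot     => .bot
  | .and A B => .and (A.subst σ) (B.subst σ)
  | .or A B  => .or (A.subst σ) (B.subst σ)
  | .imp A B => .imp (A.subst σ) (B.subst σ)
  | .box A   => .box (A.subst σ)
  | .dia A   => .dia (A.subst σ)

/-- A sequent: a finite multiset antecedent together with a succedent
containing at most one formula. -/
abbrev Seq (α : Type) : Type := Multiset (Fml α) × Option (Fml α)

/-- A rule set relates a (finite) list of premise sequents to a conclusion sequent. -/
abbrev RuleSet (α : Type) : Type := List (Seq α) → Seq α → Prop

/-- The axioms and rules of the single-conclusion sequent calculus `LJ`, stated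
schematically: they are closed under substituting arbitrary formulas for atoms
and arbitrary multisets (resp. succedents) for the context variables. -/
inductive LJRule : List (Seq α) → Seq α → Prop where
  | id (Γ : Multiset (Fml α)) (A : Fml α) : LJRule [] (A ::ₘ Γ, some A)
  | botL (Γ : Multiset (Fml α)) (Δ : Option (Fml α)) : LJRule [] (.bot ::ₘ Γ, Δ)
  | topR (Γ : Multiset (Fml α)) : LJRule [] (Γ, some .top)
  | wL (A : Fml α) (Γ : Multiset (Fml α)) (Δ : Option (Fml α)) :
      LJRule [(Γ, Δ)] (A ::ₘ Γ, Δ)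
  | wR (A : Fml α) (Γ : Multiset (Fml α)) : LJRule [(Γ, none)] (Γ, some A)
  | cL (A : Fml α) (Γ : Multiset (Fml α)) (Δ : Option (Fml α)) :
      LJRule [(A ::ₘ A ::ₘ Γ, Δ)] (A ::ₘ Γ, Δ)
  | cut (A : Fml α) (Γ : Multiset (Fml α)) (Δ : Option (Fml α)) :
      LJRule [(Γ, some A), (A ::ₘ Γ, Δ)] (Γ, Δ)
  | andL₁ (A B : Fml α) (Γ : Multiset (Fml α)) (Δ : Option (Fml α)) :
      LJRule [(A ::ₘ Γ, Δ)] (.and A B ::ₘ Γ, Δ)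
  | andL₂ (A B : Fml α) (Γ : Multiset (Fml α)) (Δ : Option (Fml α)) :
      LJRule [(B ::ₘ Γ, Δ)] (.and A B ::ₘ Γ, Δ)
  | andR (A B : Fml α) (Γ : Multiset (Fml α)) :
      LJRule [(Γ, some A), (Γ, some B)] (Γ, some (.and A B))
  | orL (A B : Fml α) (Γ : Multiset (Fml α)) (Δ : Option (Fml α)) :
      LJRule [(A ::ₘ Γ, Δ), (B ::ₘ Γ, Δ)] (.or A B ::ₘ Γ, Δ)
  | orR₁ (A B : Fml α) (Γ : Multiset (Fml α)) : LJRule [(Γ, some A)] (Γ, some (.or A B))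
  | orR₂ (A B : Fml α) (Γ : Multiset (Fml α)) : LJRule [(Γ, some B)] (Γ, some (.or A B))
  | impL (A B : Fml α) (Γ : Multiset (Fml α)) (Δ : Option (Fml α)) :
      LJRule [(Γ, some A), (B ::ₘ Γ, Δ)] (.imp A B ::ₘ Γ, Δ)
  | impR (A B : Fml α) (Γ : Multiset (Fml α)) :
      LJRule [(A ::ₘ Γ, some B)] (Γ, some (.imp A B))

/-- The rule `K_□`: from `Γ ⇒ A` infer `□Γ ⇒ □A`. -/
inductive KBoxRule : List (Seq α) → Seq α → Prop where
  | mk (Γ : Multiset (Fml α)) (A : Fml α) :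
      KBoxRule [(Γ, some A)] (Γ.map Fml.box, some (.box A))

/-- The rule `K_◇`: from `Γ, A ⇒ B` infer `□Γ, ◇A ⇒ ◇B`. -/
inductive KDiaRule : List (Seq α) → Seq α → Prop where
  | mk (Γ : Multiset (Fml α)) (A B : Fml α) :
      KDiaRule [(A ::ₘ Γ, some B)] (.dia A ::ₘ Γ.map Fml.box, some (.dia B))

/-- The rule `◇L`: from `Γ, A ⇒ B` infer `Γ, ◇A ⇒ ◇B`. -/
inductive DiaLRule : List (Seq α) → Seq α → Prop where
  | mk (Γ : Multiset (Fml α)) (A B : Fml α) :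
      DiaLRule [(A ::ₘ Γ, some B)] (.dia A ::ₘ Γ, some (.dia B))

/-- Adding a set `Ax` of axioms to a calculus: the initial sequents `⇒ σ(A)`
for every substitution instance `σ(A)` of every `A ∈ Ax`. -/
def axRule (Ax : Fml α → Prop) : RuleSet α := fun ps c =>
  ps = [] ∧ ∃ (A : Fml α) (σ : α → Fml α), Ax A ∧ c = ((0 : Multiset (Fml α)), some (A.subst σ))

/-- Using a set of sequents as additional initial sequents (assumptions). -/
def hypRule (H : Set (Seq α)) : RuleSet α := fun ps c => ps = [] ∧ c ∈ H

/-- The sequent calculus `LJ+Ax`. -/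
def LJSys (Ax : Fml α → Prop) : RuleSet α := fun ps c => LJRule ps c ∨ axRule Ax ps c

/-- The sequent calculus `CK+Ax = LJ + K_□ + K_◇ + Ax`. -/
def CKSys (Ax : Fml α → Prop) : RuleSet α := fun ps c =>
  LJRule ps c ∨ KBoxRule ps c ∨ KDiaRule ps c ∨ axRule Ax ps c

/-- The sequent calculus `CK_□+Ax = LJ + K_□ + Ax`. -/
def CKBoxSys (Ax : Fml α → Prop) : RuleSet α := fun ps c =>
  LJRule ps c ∨ KBoxRule ps c ∨ axRule Ax ps c

/-- The sequent calculus `BLL+Ax = LJ + ◇L + Ax`. -/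
def BLLSys (Ax : Fml α → Prop) : RuleSet α := fun ps c =>
  LJRule ps c ∨ DiaLRule ps c ∨ axRule Ax ps c

/-- Provability of a sequent in the calculus generated by a rule set. -/
inductive Derives (R : RuleSet α) : Multiset (Fml α) → Option (Fml α) → Prop where
  | step {ps : List (Seq α)} {c : Seq α} (hr : R ps c)
      (hp : ∀ p ∈ ps, Derives R p.1 p.2) : Derives R c.1 c.2

/-- Basic formulas: generated from atoms, `⊤`, `⊥` by `∧`, `∨`, `◇`. -/
inductive Basic : Fml α → Prop where
  | atom (a : α) : Basic (.atom a)
  | top : Basic (.top : Fml α)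
  | bot : Basic (.bot : Fml α)
  | and {A B : Fml α} : Basic A → Basic B → Basic (.and A B)
  | or {A B : Fml α} : Basic A → Basic B → Basic (.or A B)
  | dia {A : Fml α} : Basic A → Basic (.dia A)

/-- Almost positive formulas: generated from basic formulas by `∧`, `∨`, `□`, `◇`
and implications `A → B` with `A` basic and `B` almost positive. -/
inductive AlmostPos : Fml α → Prop where
  | basic {A : Fml α} : Basic A → AlmostPos A
  | and {A B : Fml α} : AlmostPos A → AlmostPos B → AlmostPos (.and A B)
  | or {A B : Fml α} : AlmostPos A → AlmostPos B → AlmostPos (.or A B)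
  | box {A : Fml α} : AlmostPos A → AlmostPos (.box A)
  | dia {A : Fml α} : AlmostPos A → AlmostPos (.dia A)
  | imp {A B : Fml α} : Basic A → AlmostPos B → AlmostPos (.imp A B)

/-- Constructive formulas: generated from basic formulas by `∧`, `□` and
implications `A → B` with `A` almost positive and `B` constructive. -/
inductive Constructive : Fml α → Prop where
  | basic {A : Fml α} : Basic A → Constructive A
  | and {A B : Fml α} : Constructive A → Constructive B → Constructive (.and A B)
  | box {A : Fml α} : Constructive A → Constructive (.box A)
  | imp {A B : Fml α} : AlmostPos A → Constructive B → Constructive (.imp A B)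

/-- Harrop formulas: atoms, `⊥`, `⊤`, closed under `∧`, `□`, and implications
`A → B` with `A` arbitrary and `B` Harrop. -/
inductive Harrop : Fml α → Prop where
  | atom (a : α) : Harrop (.atom a)
  | top : Harrop (.top : Fml α)
  | bot : Harrop (.bot : Fml α)
  | and {A B : Fml α} : Harrop A → Harrop B → Harrop (.and A B)
  | box {A : Fml α} : Harrop A → Harrop (.box A)
  | imp (A : Fml α) {B : Fml α} : Harrop B → Harrop (.imp A B)

/-- Conjunction of a list of formulas (`⋀∅ = ⊤`). -/
def conj : List (Fml α) → Fml α
  | [] => .top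
  | [A] => A
  | A :: B :: l => .and A (conj (B :: l))

/-- Disjunction of a list of formulas (`⋁∅ = ⊥`). -/
def disj : List (Fml α) → Fml α
  | [] => .bot
  | [A] => A
  | A :: B :: l => .or A (disj (B :: l))

/-- Disjunction of a succedent (at most one formula; `⋁∅ = ⊥`). -/
def odisj : Option (Fml α) → Fml α
  | none => .bot
  | some A => A

/-- The multiset `{A_i → B_i}_{i ∈ I}` of implications of an indexed family. -/
def imps (AB : List (Fml α × Fml α)) : Multiset (Fml α) :=
  ↑(AB.map fun p => Fml.imp p.1 p.2)

/-- The conjunction `⋀_{i∈I} (A_i → B_i)` of an indexed family of implications. -/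
def impConj (AB : List (Fml α × Fml α)) : Fml α :=
  conj (AB.map fun p => Fml.imp p.1 p.2)

/-- Truth in the one-node *irreflexive* frame `𝒦ᵢ` under a Boolean valuation:
`□A` is always true and `◇A` is always false; the propositional connectives
are evaluated classically. -/
def evalI (v : α → Bool) : Fml α → Bool
  | .atom a  => v a
  | .top     => true
  | .bot     => false
  | .and A B => evalI v A && evalI v B
  | .or A B  => evalI v A || evalI v B
  | .imp A B => !evalI v A || evalI v B
  | .box _   => true
  | .dia _   => false

/-- Truth in the one-node *reflexive* frame `𝒦ᵣ` under a Boolean valuation: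
`□A` and `◇A` take the value of `A`. -/
def evalR (v : α → Bool) : Fml α → Bool
  | .atom a  => v a
  | .top     => true
  | .bot     => false
  | .and A B => evalR v A && evalR v B
  | .or A B  => evalR v A || evalR v B
  | .imp A B => !evalR v A || evalR v B
  | .box A   => evalR v A
  | .dia A   => evalR v A

/-- Validity of a sequent with respect to a one-node semantics: under every
valuation, if all formulas of the antecedent are true then so is the succedent. -/
def SeqValid (ev : (α → Bool) → Fml α → Bool) (Γ : Multiset (Fml α)) (Δ : Option (Fml α)) :
    Prop :=
  ∀ v : α → Bool, (∀ A ∈ Γ, ev v A = true) → ∃ B ∈ Δ, ev v B = true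

/-- `CK+Ax` is T-free: every provable sequent is valid in the irreflexive node frame. -/
def TFree (Ax : Fml α → Prop) : Prop :=
  ∀ (Γ : Multiset (Fml α)) (Δ : Option (Fml α)), Derives (CKSys Ax) Γ Δ → SeqValid evalI Γ Δ

/-- `CK+Ax` is T-full: every provable sequent is valid in the reflexive node
frame and the calculus proves `⇒ □p → p` and `⇒ p → ◇p`. -/
def TFull (Ax : Fml α → Prop) : Prop :=
  (∀ (Γ : Multiset (Fml α)) (Δ : Option (Fml α)), Derives (CKSys Ax) Γ Δ → SeqValid evalR Γ Δ) ∧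
  (∀ a : α, Derives (CKSys Ax) 0 (some (.imp (.box (.atom a)) (.atom a)))) ∧
  (∀ a : α, Derives (CKSys Ax) 0 (some (.imp (.atom a) (.dia (.atom a)))))

/-- Classical validity of a (modality-free) sequent: `⋀Γ → ⋁Δ` is true under
every Boolean valuation of the atoms. -/
def ClValid (Γ : Multiset (Fml α)) (Δ : Option (Fml α)) : Prop :=
  ∀ v : α → Bool, (∀ A ∈ Γ, evalI v A = true) → ∃ B ∈ Δ, evalI v B = true

/-- Nonempty conjunctions of atoms. -/
inductive AtomConj : Fml α → Prop where
  | single (a : α) : AtomConj (.atom a)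
  | and {A B : Fml α} : AtomConj A → AtomConj B → AtomConj (.and A B)

/-- Implicational Horn formulas: `⊥`, atoms, and implications `⋀Q → r` with `Q`
a nonempty multiset of atoms and `r` an atom or `⊥`. -/
inductive ImpHorn : Fml α → Prop where
  | bot : ImpHorn (.bot : Fml α)
  | atom (a : α) : ImpHorn (.atom a)
  | impAtom {A : Fml α} (hA : AtomConj A) (a : α) : ImpHorn (.imp A (.atom a))
  | impBot {A : Fml α} (hA : AtomConj A) : ImpHorn (.imp A .bot)

/-- Formulas of the form `◇^n p` with `p` an atom and `n ≥ 0`. -/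
inductive DiaPowAtom : Fml α → Prop where
  | atom (a : α) : DiaPowAtom (.atom a)
  | dia {A : Fml α} : DiaPowAtom A → DiaPowAtom (.dia A)

/-- Nonempty conjunctions `⋀_{i=1}^k ◇^{n_i} p_i` of formulas `◇^{n_i} p_i`. -/
inductive DiaConj : Fml α → Prop where
  | single {A : Fml α} : DiaPowAtom A → DiaConj A
  | and {A B : Fml α} : DiaConj A → DiaConj B → DiaConj (.and A B)

/-- Modal Horn formulas: `⊥` and atoms, closed under `□` and under implications
`A → B` with `A = ⋀_{i=1}^k ◇^{n_i} p_i` and `B` modal Horn. -/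
inductive ModalHorn : Fml α → Prop where
  | bot : ModalHorn (.bot : Fml α)
  | atom (a : α) : ModalHorn (.atom a)
  | box {A : Fml α} : ModalHorn A → ModalHorn (.box A)
  | imp {A B : Fml α} : DiaConj A → ModalHorn B → ModalHorn (.imp A B)

/-- The predicate "all atoms of the formula satisfy `P`". -/
def Fml.AtomsIn (P : α → Prop) : Fml α → Prop
  | .atom a  => P a
  | .top     => True
  | .bot     => True
  | .and A B => A.AtomsIn P ∧ B.AtomsIn P
  | .or A B  => A.AtomsIn P ∧ B.AtomsIn P
  | .imp A B => A.AtomsIn P ∧ B.AtomsIn P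
  | .box A   => A.AtomsIn P
  | .dia A   => A.AtomsIn P

/-- No `◇` occurs in the formula. -/
def Fml.DiaFree : Fml α → Prop
  | .atom _  => True
  | .top     => True
  | .bot     => True
  | .and A B => A.DiaFree ∧ B.DiaFree
  | .or A B  => A.DiaFree ∧ B.DiaFree
  | .imp A B => A.DiaFree ∧ B.DiaFree
  | .box A   => A.DiaFree
  | .dia _   => False

/-- No `□` occurs in the formula. -/
def Fml.BoxFree : Fml α → Prop
  | .atom _  => True
  | .top     => True
  | .bot     => True
  | .and A B => A.BoxFree ∧ B.BoxFree
  | .or A B  => A.BoxFree ∧ B.BoxFree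
  | .imp A B => A.BoxFree ∧ B.BoxFree
  | .box _   => False
  | .dia A   => A.BoxFree

/-- The formula is modality-free (propositional). -/
def Fml.ModFree : Fml α → Prop
  | .atom _  => True
  | .top     => True
  | .bot     => True
  | .and A B => A.ModFree ∧ B.ModFree
  | .or A B  => A.ModFree ∧ B.ModFree
  | .imp A B => A.ModFree ∧ B.ModFree
  | .box _   => False
  | .dia _   => False

/-- An angling of the language: an injection `φ ↦ ⟨φ⟩` from formulas into the
atoms whose image (the angled atoms) is disjoint from a fixed infinite set of
plain atoms. -/
structure Angling (α : Type) where
  angle : Fml α → α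
  plain : Set α
  inj : Function.Injective angle
  plain_infinite : plain.Infinite
  disjoint : ∀ φ : Fml α, angle φ ∉ plain

/-- `a` is an angled atom. -/
def Angling.Angled (S : Angling α) (a : α) : Prop := ∃ φ : Fml α, S.angle φ = a

/-- The translation `t`: `⊥^t = ⊥`, `p^t = ⟨p⟩`, `⊤^t = ⟨⊤⟩`,
`(A ∘ B)^t = (A^t ∘ B^t) ∧ ⟨A ∘ B⟩` and `(○A)^t = (○A^t) ∧ ⟨○A⟩`. -/
def Angling.tr (S : Angling α) : Fml α → Fml α
  | .atom a  => .atom (S.angle (.atom a))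
  | .top     => .atom (S.angle .top)
  | .bot     => .bot
  | .and A B => .and (.and (S.tr A) (S.tr B)) (.atom (S.angle (.and A B)))
  | .or A B  => .and (.or (S.tr A) (S.tr B)) (.atom (S.angle (.or A B)))
  | .imp A B => .and (.imp (S.tr A) (S.tr B)) (.atom (S.angle (.imp A B)))
  | .box A   => .and (.box (S.tr A)) (.atom (S.angle (.box A)))
  | .dia A   => .and (.dia (S.tr A)) (.atom (S.angle (.dia A)))

/-- Action of the standard substitution on atoms: an angled atom `⟨φ⟩` is sent
to `φ`; plain atoms are fixed. -/
noncomputable def Angling.stdAtom (S : Angling α) (a : α) : Fml α :=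
  haveI := Classical.propDecidable (∃ φ : Fml α, S.angle φ = a)
  if h : ∃ φ : Fml α, S.angle φ = a then h.choose else .atom a

/-- The standard substitution `s`: replaces each angled atom `⟨φ⟩` by `φ`,
fixes the plain atoms, and commutes with all connectives. -/
noncomputable def Angling.std (S : Angling α) : Fml α → Fml α :=
  Fml.subst S.stdAtom

/-- The Visser–Harrop property of a calculus. -/
def VisserHarrop (R : RuleSet α) : Prop :=
  ∀ (Γ : Multiset (Fml α)), (∀ A ∈ Γ, Harrop A) →
  ∀ (AB : List (Fml α × Fml α)) (C D : Fml α),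
    Derives R (Γ + imps AB) (some (.or C D)) →
    Derives R (Γ + imps AB) (some C) ∨
    Derives R (Γ + imps AB) (some D) ∨
    ∃ p ∈ AB, Derives R (Γ + imps AB) (some p.1)

/-- The disjunction property of a calculus. -/
def DisjProp (R : RuleSet α) : Prop :=
  ∀ C D : Fml α, Derives R 0 (some (.or C D)) →
    Derives R 0 (some C) ∨ Derives R 0 (some D)

/-- The formula interpretation `I(Γ ⇒ Δ) = ⋀Γ → ⋁Δ` belongs to `L` (stated for
every enumeration of the antecedent multiset as a list). -/
def interpIn (L : Set (Fml α)) (s : Seq α) : Prop :=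
  ∀ l : List (Fml α), (↑l : Multiset (Fml α)) = s.1 → Fml.imp (conj l) (odisj s.2) ∈ L

/- Named modal axioms (with `p := atom 0`, `q := atom 1`). -/
def axTa : Fml ℕ := .imp (.box (.atom 0)) (.atom 0)
def axTb : Fml ℕ := .imp (.atom 0) (.dia (.atom 0))
def axBa : Fml ℕ := .imp (.dia (.box (.atom 0))) (.atom 0)
def axBb : Fml ℕ := .imp (.atom 0) (.box (.dia (.atom 0)))
def ax4a : Fml ℕ := .imp (.box (.atom 0)) (.box (.box (.atom 0)))
def ax4b : Fml ℕ := .imp (.dia (.dia (.atom 0))) (.dia (.atom 0))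
def ax5a : Fml ℕ := .imp (.dia (.box (.atom 0))) (.box (.atom 0))
def ax5b : Fml ℕ := .imp (.dia (.atom 0)) (.box (.dia (.atom 0)))
def axDiaBot : Fml ℕ := .imp (.dia .bot) .bot
def axDiaOr : Fml ℕ :=
  .imp (.dia (.or (.atom 0) (.atom 1))) (.or (.dia (.atom 0)) (.dia (.atom 1)))
def axBoxImp : Fml ℕ :=
  .imp (.imp (.dia (.atom 0)) (.box (.atom 1))) (.box (.imp (.atom 0) (.atom 1)))

/-- The axioms of `X ⊆ {T, B, 4, 5}` in both their `a`- and `b`-versions. -/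
def XAxioms (tT tB t4 t5 : Bool) : Set (Fml ℕ) :=
  (if tT then ({axTa, axTb} : Set (Fml ℕ)) else ∅) ∪
  (if tB then ({axBa, axBb} : Set (Fml ℕ)) else ∅) ∪
  (if t4 then ({ax4a, ax4b} : Set (Fml ℕ)) else ∅) ∪
  (if t5 then ({ax5a, ax5b} : Set (Fml ℕ)) else ∅)

/-- The additional axioms of `IK` over `CK`. -/
def IKExtra : Set (Fml ℕ) := {axDiaBot, axDiaOr, axBoxImp}

/-- The right rule with premises `{Γ, φ̄_i ⇒ ψ̄_i}_{i∈I}` and conclusion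
`Γ, θ̄ ⇒ η̄`, closed under all substitutions of formulas for atoms and
multisets for the context `Γ`. -/
def rightRuleInst (prems : List (List (Fml α) × Option (Fml α)))
    (θ : List (Fml α)) (η : Option (Fml α)) : RuleSet α := fun ps c =>
  ∃ (σ : α → Fml α) (Γ : Multiset (Fml α)),
    ps = prems.map (fun pr =>
        ((Γ + ↑(pr.1.map (Fml.subst σ)) : Multiset (Fml α)), pr.2.map (Fml.subst σ))) ∧
    c = ((Γ + ↑(θ.map (Fml.subst σ)) : Multiset (Fml α)), η.map (Fml.subst σ))

/-- The left rule with premises `{Γ, φ̄_i ⇒ ψ̄_i}_{i∈I} ∪ {Γ, θ̄_j ⇒ Δ}_{j∈J}`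
and conclusion `Γ, η̄ ⇒ Δ`, closed under all substitutions of formulas for
atoms and multisets for `Γ` and `Δ`. -/
def leftRuleInst (prems : List (List (Fml α) × Option (Fml α)))
    (lefts : List (List (Fml α))) (η : List (Fml α)) : RuleSet α := fun ps c =>
  ∃ (σ : α → Fml α) (Γ : Multiset (Fml α)) (Δ : Option (Fml α)),
    ps = prems.map (fun pr =>
          ((Γ + ↑(pr.1.map (Fml.subst σ)) : Multiset (Fml α)), pr.2.map (Fml.subst σ)))
        ++ lefts.map (fun θj => ((Γ + ↑(θj.map (Fml.subst σ)) : Multiset (Fml α)), Δ)) ∧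
    c = ((Γ + ↑(η.map (Fml.subst σ)) : Multiset (Fml α)), Δ)

/-- The formula `Ax_R` of a right rule. -/
def AxRight (prems : List (List (Fml α) × Option (Fml α)))
    (θ : List (Fml α)) (η : Option (Fml α)) : Fml α :=
  .imp (.and (conj (prems.map fun pr => .imp (conj pr.1) (odisj pr.2))) (conj θ)) (odisj η)

/-- The formula `Ax_R` of a left rule. -/
def AxLeft (prems : List (List (Fml α) × Option (Fml α)))
    (lefts : List (List (Fml α))) (η : List (Fml α)) : Fml α :=
  .imp (.and (conj (prems.map fun pr => .imp (conj pr.1) (odisj pr.2))) (conj η))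
    (disj (lefts.map conj))

/-- The forgetful translation `f_i`: fixes atoms, `⊤`, `⊥`, commutes with
`∧`, `∨`, `→`, `□`, and sends every `◇A` to `⊥`. -/
def fi : Fml α → Fml α
  | .atom a  => .atom a
  | .top     => .top
  | .bot     => .bot
  | .and A B => .and (fi A) (fi B)
  | .or A B  => .or (fi A) (fi B)
  | .imp A B => .imp (fi A) (fi B)
  | .box A   => .box (fi A)
  | .dia _   => .bot

/-- The forgetful translation `f_r`: fixes atoms, `⊤`, `⊥`, commutes with
`∧`, `∨`, `→`, `□`, and sends `◇A` to `f_r A`. -/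
def fr : Fml α → Fml α
  | .atom a  => .atom a
  | .top     => .top
  | .bot     => .bot
  | .and A B => .and (fr A) (fr B)
  | .or A B  => .or (fr A) (fr B)
  | .imp A B => .imp (fr A) (fr B)
  | .box A   => .box (fr A)
  | .dia A   => fr A



/-! `Ax_R` internalises the left rule `R`: its antecedent packs the side premises as
implications together with the principal formulas `η̄`, its consequent is the disjunction
of the left premises. For (i), instantiate `R` with the antecedent of `Ax_R` as context:
all premises are then derivable in `LJ`, and contraction with `∧L` turns the conclusion
into `⇒ Ax_R`. For (ii), `LJ` derives the antecedent of `σ(Ax_R)` from `Γ, σ(η̄)` and the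
side premises, and each disjunct of its consequent yields `Δ` by a left premise; a cut
on `σ(Ax_R)` concludes. -/

namespace Derives

variable {α : Type} {R : RuleSet α}

lemma initial {Γ : Multiset (Fml α)} {Δ : Option (Fml α)} (hr : R [] (Γ, Δ)) :
    Derives R Γ Δ :=
  .step (c := (Γ, Δ)) hr (by simp)

variable (hR : LJRule ≤ R)
include hR

lemma lj₀ {Γ : Multiset (Fml α)} {Δ : Option (Fml α)} (hr : LJRule [] (Γ, Δ)) :
    Derives R Γ Δ :=
  initial (hR _ _ hr)

lemma lj₁ {Γ₁ Γ : Multiset (Fml α)} {Δ₁ Δ : Option (Fml α)} (hr : LJRule [(Γ₁, Δ₁)] (Γ, Δ))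
    (h₁ : Derives R Γ₁ Δ₁) : Derives R Γ Δ :=
  .step (c := (Γ, Δ)) (hR _ _ hr) (by simpa using h₁)

lemma lj₂ {Γ₁ Γ₂ Γ : Multiset (Fml α)} {Δ₁ Δ₂ Δ : Option (Fml α)}
    (hr : LJRule [(Γ₁, Δ₁), (Γ₂, Δ₂)] (Γ, Δ)) (h₁ : Derives R Γ₁ Δ₁) (h₂ : Derives R Γ₂ Δ₂) :
    Derives R Γ Δ :=
  .step (c := (Γ, Δ)) (hR _ _ hr) (by simp [h₁, h₂])

lemma weaken {Γ Γ' : Multiset (Fml α)} {Δ : Option (Fml α)} (hle : Γ ≤ Γ')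
    (hd : Derives R Γ Δ) : Derives R Γ' Δ := by
  obtain ⟨Θ, rfl⟩ := Multiset.le_iff_exists_add.1 hle
  induction Θ using Multiset.induction_on with
  | empty => simpa using hd
  | cons A Θ ih =>
    rw [Multiset.add_cons]
    exact lj₁ hR (.wL A (Γ + Θ) Δ) (ih (Multiset.le_add_right _ _))

lemma of_mem {A : Fml α} {Γ : Multiset (Fml α)} (hA : A ∈ Γ) : Derives R Γ (some A) := by
  obtain ⟨Γ', rfl⟩ := Multiset.exists_cons_of_mem hA
  exact lj₀ hR (.id Γ' A)

lemma conj_right {Γ : Multiset (Fml α)} : ∀ {l : List (Fml α)},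
    (∀ A ∈ l, Derives R Γ (some A)) → Derives R Γ (some (conj l))
  | [], _ => lj₀ hR (.topR Γ)
  | [A], hl => hl A (by simp)
  | A :: B :: l, hl =>
    lj₂ hR (.andR A (conj (B :: l)) Γ) (hl A (by simp))
      (conj_right fun C hC => hl C (List.mem_cons_of_mem A hC))

lemma conj_of_le {Γ : Multiset (Fml α)} {l : List (Fml α)} (hl : ↑l ≤ Γ) :
    Derives R Γ (some (conj l)) :=
  conj_right hR fun _ hA => of_mem hR (Multiset.mem_of_le hl (Multiset.mem_coe.2 hA))

lemma conj_left {Δ : Option (Fml α)} : ∀ {l : List (Fml α)} {Γ : Multiset (Fml α)},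
    Derives R (↑l + Γ) Δ → Derives R (conj l ::ₘ Γ) Δ
  | [], Γ, hd => lj₁ hR (.wL .top Γ Δ) (by simpa using hd)
  | [A], Γ, hd => by simpa [conj] using hd
  | A :: B :: l, Γ, hd => by
    have hBl : Derives R (conj (B :: l) ::ₘ A ::ₘ Γ) Δ :=
      conj_left (by simpa [← Multiset.cons_coe, Multiset.add_cons] using hd)
    refine lj₁ hR (.cL (.and A (conj (B :: l))) Γ Δ) ?_
    refine lj₁ hR (.andL₁ A (conj (B :: l)) _ Δ) ?_
    rw [Multiset.cons_swap]
    exact lj₁ hR (.andL₂ A (conj (B :: l)) (A ::ₘ Γ) Δ) hBl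

lemma disj_right {Γ : Multiset (Fml α)} {A : Fml α} (hA : Derives R Γ (some A)) :
    ∀ {l : List (Fml α)}, A ∈ l → Derives R Γ (some (disj l))
  | [], hl => absurd hl List.not_mem_nil
  | [B], hl => by rwa [List.mem_singleton.1 hl] at hA
  | B :: C :: l, hl => by
    rcases List.mem_cons.1 hl with rfl | hl
    · exact lj₁ hR (.orR₁ A (disj (C :: l)) Γ) hA
    · exact lj₁ hR (.orR₂ B (disj (C :: l)) Γ) (disj_right hA hl)

lemma disj_left {Γ : Multiset (Fml α)} {Δ : Option (Fml α)} : ∀ {l : List (Fml α)},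
    (∀ A ∈ l, Derives R (A ::ₘ Γ) Δ) → Derives R (disj l ::ₘ Γ) Δ
  | [], _ => lj₀ hR (.botL Γ Δ)
  | [A], hl => hl A (by simp)
  | A :: B :: l, hl =>
    lj₂ hR (.orL A (disj (B :: l)) Γ Δ) (hl A (by simp))
      (disj_left fun C hC => hl C (List.mem_cons_of_mem A hC))

lemma odisj_left (Γ : Multiset (Fml α)) : ∀ Δ : Option (Fml α), Derives R (odisj Δ ::ₘ Γ) Δ
  | none => lj₀ hR (.botL Γ none)
  | some A => lj₀ hR (.id Γ A)

lemma odisj_right {Γ : Multiset (Fml α)} : ∀ {Δ : Option (Fml α)},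
    Derives R Γ Δ → Derives R Γ (some (odisj Δ))
  | none, hd => lj₁ hR (.wR .bot Γ) hd
  | some _, hd => hd

end Derives

section Substitution

variable {α β : Type}

@[simp] lemma Fml.subst_atom : Fml.subst (Fml.atom : α → Fml α) = id := by
  funext A
  induction A <;> simp_all [Fml.subst]

lemma Fml.subst_conj (σ : β → Fml α) : ∀ l : List (Fml β),
    (conj l).subst σ = conj (l.map (Fml.subst σ))
  | [] => rfl
  | [_] => rfl
  | A :: B :: l => congrArg (Fml.and (A.subst σ)) (Fml.subst_conj σ (B :: l))

lemma Fml.subst_disj (σ : β → Fml α) : ∀ l : List (Fml β),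
    (disj l).subst σ = disj (l.map (Fml.subst σ))
  | [] => rfl
  | [_] => rfl
  | A :: B :: l => congrArg (Fml.or (A.subst σ)) (Fml.subst_disj σ (B :: l))

lemma Fml.subst_odisj (σ : β → Fml α) : ∀ o : Option (Fml β),
    (odisj o).subst σ = odisj (o.map (Fml.subst σ))
  | none => rfl
  | some _ => rfl

lemma AxLeft_subst (σ : β → Fml α) (prems : List (List (Fml β) × Option (Fml β)))
    (lefts : List (List (Fml β))) (η : List (Fml β)) :
    (AxLeft prems lefts η).subst σ =
      AxLeft (prems.map fun pr => (pr.1.map (Fml.subst σ), pr.2.map (Fml.subst σ)))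
        (lefts.map (List.map (Fml.subst σ))) (η.map (Fml.subst σ)) := by
  simp [AxLeft, Fml.subst, Fml.subst_conj, Fml.subst_disj, Fml.subst_odisj, Function.comp_def]

end Substitution

section LeftRule

variable {α : Type} (R : RuleSet α) (prems : List (List (Fml α) × Option (Fml α)))
  (lefts : List (List (Fml α))) (η : List (Fml α))

def ClosedUnderLeftRule : Prop :=
  ∀ (Γ : Multiset (Fml α)) (Δ : Option (Fml α)),
    (∀ pr ∈ prems, Derives R (Γ + ↑pr.1) pr.2) →
    (∀ θ ∈ lefts, Derives R (Γ + ↑θ) Δ) → Derives R (Γ + ↑η) Δ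

variable {R prems lefts η}

lemma closedUnderLeftRule_of_le (hR : leftRuleInst prems lefts η ≤ R) :
    ClosedUnderLeftRule R prems lefts η := by
  intro Γ Δ hprem hleft
  refine .step (c := (Γ + (η : Multiset (Fml α)), Δ)) (hR _ _ ⟨Fml.atom, Γ, Δ, rfl, by simp⟩) ?_
  simp only [Fml.subst_atom, List.map_id, Option.map_id, id_eq, List.mem_append,
    List.mem_map]
  rintro p (⟨pr, hpr, rfl⟩ | ⟨θ, hθ, rfl⟩)
  exacts [hprem pr hpr, hleft θ hθ]

lemma derives_axLeft (hLJ : LJRule ≤ R) (hR : ClosedUnderLeftRule R prems lefts η) :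
    Derives R 0 (some (AxLeft prems lefts η)) := by
  refine Derives.lj₁ hLJ (.impR _ _ 0) (Derives.lj₁ hLJ (.cL _ 0 _) ?_)
  refine Derives.lj₁ hLJ (.andL₂ _ _ _ _) (Derives.conj_left hLJ ?_)
  rw [add_comm]
  refine hR _ _ (fun pr hpr => ?_) (fun θ hθ => ?_)
  · rw [Multiset.cons_add, zero_add]
    refine Derives.lj₁ hLJ (.andL₁ _ _ _ pr.2) (Derives.conj_left hLJ ?_)
    have hmem : Fml.imp (conj pr.1) (odisj pr.2) ∈
        (↑(prems.map fun pr => Fml.imp (conj pr.1) (odisj pr.2)) : Multiset (Fml α)) :=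
      Multiset.mem_coe.2 (List.mem_map.2 ⟨pr, hpr, rfl⟩)
    refine Derives.weaken hLJ (Multiset.add_le_add_right (Multiset.singleton_le.2 hmem)) ?_
    exact Derives.lj₂ hLJ (.impL _ _ _ pr.2) (Derives.conj_of_le hLJ le_rfl)
      (Derives.odisj_left hLJ _ pr.2)
  · exact Derives.disj_right hLJ (Derives.conj_of_le hLJ (Multiset.le_add_left _ _))
      (List.mem_map.2 ⟨θ, hθ, rfl⟩)

lemma closedUnderLeftRule_of_derives_axLeft (hLJ : LJRule ≤ R)
    (hax : Derives R 0 (some (AxLeft prems lefts η))) : ClosedUnderLeftRule R prems lefts η := by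
  intro Γ Δ hprem hleft
  set P := conj (prems.map fun pr => Fml.imp (conj pr.1) (odisj pr.2))
  have hP : Derives R (Γ + ↑η) (some P) := by
    refine Derives.conj_right hLJ fun F hF => ?_
    obtain ⟨pr, hpr, rfl⟩ := List.mem_map.1 hF
    refine Derives.lj₁ hLJ (.impR _ _ _) (Derives.conj_left hLJ ?_)
    refine Derives.odisj_right hLJ (Derives.weaken hLJ ?_ (hprem pr hpr))
    rw [add_comm _ (Γ + _), add_right_comm]
    exact le_self_add
  have hD : Derives R (disj (lefts.map conj) ::ₘ (Γ + ↑η)) Δ := by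
    refine Derives.disj_left hLJ fun F hF => ?_
    obtain ⟨θ, hθ, rfl⟩ := List.mem_map.1 hF
    refine Derives.conj_left hLJ (Derives.weaken hLJ ?_ (hleft θ hθ))
    rw [add_comm _ (Γ + _), add_right_comm]
    exact le_self_add
  refine Derives.lj₂ hLJ (.cut _ _ Δ) (Derives.weaken hLJ (Multiset.zero_le _) hax) ?_
  exact Derives.lj₂ hLJ (.impL _ _ _ Δ)
    (Derives.lj₂ hLJ (.andR _ _ _) hP (Derives.conj_of_le hLJ (Multiset.le_add_left _ _))) hD

lemma derives_of_derives_axLeft_subst (hLJ : LJRule ≤ R) (σ : α → Fml α)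
    {Γ : Multiset (Fml α)} {Δ : Option (Fml α)}
    (hax : Derives R 0 (some ((AxLeft prems lefts η).subst σ)))
    (hprem : ∀ pr ∈ prems,
      Derives R (Γ + ↑(pr.1.map (Fml.subst σ))) (pr.2.map (Fml.subst σ)))
    (hleft : ∀ θ ∈ lefts, Derives R (Γ + ↑(θ.map (Fml.subst σ))) Δ) :
    Derives R (Γ + ↑(η.map (Fml.subst σ))) Δ := by
  rw [AxLeft_subst] at hax
  exact closedUnderLeftRule_of_derives_axLeft hLJ hax Γ Δ
    (List.forall_mem_map.2 hprem) (List.forall_mem_map.2 hleft)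

end LeftRule

/-- the axiom `Ax_R` of a left rule `R`: (i) `⇒ Ax_R` is
provable in `LJ + R`; (ii) `R` is derivable (from its premises, as
assumptions) in `LJ + Ax_R`. -/
theorem statement_12 (prems : List (List (Fml ℕ) × Option (Fml ℕ)))
    (lefts : List (List (Fml ℕ))) (η : List (Fml ℕ)) :
    Derives (fun ps c => LJRule ps c ∨ leftRuleInst prems lefts η ps c)
      0 (some (AxLeft prems lefts η)) ∧
    (∀ (σ : ℕ → Fml ℕ) (Γ : Multiset (Fml ℕ)) (Δ : Option (Fml ℕ)),
      Derives (fun ps c => LJRule ps c ∨ axRule (· = AxLeft prems lefts η) ps c ∨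
          hypRule ({s : Seq ℕ | ∃ pr ∈ prems,
              s = ((Γ + ↑(pr.1.map (Fml.subst σ)) : Multiset (Fml ℕ)),
                   pr.2.map (Fml.subst σ))} ∪
            {s : Seq ℕ | ∃ θj ∈ lefts,
              s = ((Γ + ↑(θj.map (Fml.subst σ)) : Multiset (Fml ℕ)), Δ)}) ps c)
        (Γ + ↑(η.map (Fml.subst σ))) Δ) := by
  refine ⟨derives_axLeft (fun _ _ => Or.inl) (closedUnderLeftRule_of_le fun _ _ => Or.inr),
    fun σ Γ Δ => ?_⟩
  refine derives_of_derives_axLeft_subst (prems := prems) (lefts := lefts)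
    (fun _ _ => Or.inl) σ (Derives.initial (Or.inr (Or.inl ⟨rfl, _, σ, rfl, rfl⟩))) ?_ ?_
  · exact fun pr hpr => Derives.initial (Or.inr (Or.inr ⟨rfl, .inl ⟨pr, hpr, rfl⟩⟩))
  · exact fun θ hθ => Derives.initial (Or.inr (Or.inr ⟨rfl, .inr ⟨θ, hθ, rfl⟩⟩))

end UPT
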